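/- Let (M,d) be a finite metric space, L ≥ 1, and suppose F: P(M) → L₁[0,1] satisfies d_Wa(σ,τ) ≤ ‖F(σ) − F(τ)‖₁ ≤ L·d_Wa(σ,τ) for all σ, τ ∈ P(M). Then there exists a map H: F̃(M) → L₁([0,1]×ℝ) such that ‖μ − ν‖_tc ≤ ‖H(μ) − H(ν)‖₁ ≤ 3L·‖μ − ν‖_tc for all μ, ν ∈ F̃(M). -/

import Mathlib

open scoped BigOperators Classical

/-- `μ` admits the molecular representation `μ = ∑ j, r j • (δ_{x j} - δ_{y j})`
with positive coefficients and distinct endpoints. -/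
def IsMolRep {M : Type*} (μ : M → ℝ) {n : ℕ} (r : Fin n → ℝ) (x y : Fin n → M) : Prop :=
  (∀ j, 0 < r j) ∧ (∀ j, x j ≠ y j) ∧
    ∀ m, μ m = ∑ j, r j * ((if x j = m then (1 : ℝ) else 0) - (if y j = m then (1 : ℝ) else 0))

/-- The transportation cost of a molecular representation. -/
def molCost {M : Type*} (d : M → M → ℝ) {n : ℕ} (r : Fin n → ℝ) (x y : Fin n → M) : ℝ :=
  ∑ j, r j * d (x j) (y j)

/-- The transportation cost norm: infimum of the costs of all molecular representations. -/
noncomputable def tcNorm {M : Type*} (d : M → M → ℝ) (μ : M → ℝ) : ℝ :=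
  sInf { c | ∃ (n : ℕ) (r : Fin n → ℝ) (x y : Fin n → M), IsMolRep μ r x y ∧ c = molCost d r x y }

open MeasureTheory
namespace TCAux

open Set MeasureTheory

variable {M : Type*}

def repSet (d : M → M → ℝ) (μ : M → ℝ) : Set ℝ :=
  { c | ∃ (n : ℕ) (r : Fin n → ℝ) (x y : Fin n → M), IsMolRep μ r x y ∧ c = molCost d r x y }

lemma tcNorm_eq (d : M → M → ℝ) (μ : M → ℝ) : tcNorm d μ = sInf (repSet d μ) := rfl

variable [MetricSpace M]

lemma repSet_nonneg {μ : M → ℝ} : ∀ c ∈ repSet (dist : M → M → ℝ) μ, 0 ≤ c := by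
  rintro c ⟨n, r, x, y, hrep, rfl⟩
  exact Finset.sum_nonneg fun j _ => mul_nonneg (hrep.1 j).le dist_nonneg

lemma repSet_bddBelow {μ : M → ℝ} : BddBelow (repSet (dist : M → M → ℝ) μ) :=
  ⟨0, fun c hc => repSet_nonneg c hc⟩

lemma tcNorm_nonneg (μ : M → ℝ) : 0 ≤ tcNorm (dist : M → M → ℝ) μ :=
  Real.sInf_nonneg repSet_nonneg

lemma zero_mem_repSet (d : M → M → ℝ) : (0 : ℝ) ∈ repSet d (0 : M → ℝ) := by
  refine ⟨0, Fin.elim0, Fin.elim0, Fin.elim0, ⟨fun j => j.elim0, fun j => j.elim0, fun m => by simp⟩, by simp [molCost]⟩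

lemma tcNorm_zero : tcNorm (dist : M → M → ℝ) (0 : M → ℝ) = 0 :=
  le_antisymm (csInf_le repSet_bddBelow (zero_mem_repSet _)) (tcNorm_nonneg _)

lemma smul_mem_repSet (d : M → M → ℝ) {μ : M → ℝ} {c s : ℝ} (hc : 0 < c)
    (hs : s ∈ repSet d μ) : c * s ∈ repSet d (c • μ) := by
  obtain ⟨n, r, x, y, hrep, rfl⟩ := hs
  refine ⟨n, fun j => c * r j, x, y, ⟨fun j => mul_pos hc (hrep.1 j), hrep.2.1, fun m => ?_⟩, ?_⟩
  · simp only [Pi.smul_apply, smul_eq_mul, hrep.2.2 m, Finset.mul_sum]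
    exact Finset.sum_congr rfl fun j _ => by ring
  · simp only [molCost, Finset.mul_sum]
    exact Finset.sum_congr rfl fun j _ => by ring

lemma repSet_smul_nonempty {μ : M → ℝ} {c : ℝ} (hc : 0 < c)
    (h : (repSet (dist : M → M → ℝ) μ).Nonempty) :
    (repSet (dist : M → M → ℝ) (c • μ)).Nonempty := by
  obtain ⟨s, hs⟩ := h
  exact ⟨c * s, smul_mem_repSet _ hc hs⟩

lemma tcNorm_smul {μ : M → ℝ} {c : ℝ} (hc : 0 < c)
    (h : (repSet (dist : M → M → ℝ) μ).Nonempty) :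
    tcNorm (dist : M → M → ℝ) (c • μ) = c * tcNorm (dist : M → M → ℝ) μ := by
  have hinv : c⁻¹ • c • μ = μ := by rw [smul_smul, inv_mul_cancel₀ hc.ne', one_smul]
  apply le_antisymm
  · rw [tcNorm_eq, tcNorm_eq]
    rw [show c * sInf (repSet (dist : M → M → ℝ) μ) = sInf (repSet (dist : M → M → ℝ) μ) * c from mul_comm _ _, ← div_le_iff₀ hc]
    refine le_csInf h fun s hs => ?_
    rw [div_le_iff₀ hc, mul_comm]
    exact csInf_le repSet_bddBelow (smul_mem_repSet _ hc hs)
  · refine le_csInf (repSet_smul_nonempty hc h) fun t ht => ?_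
    have h2 : c⁻¹ * t ∈ repSet (dist : M → M → ℝ) μ := by
      have := smul_mem_repSet (dist : M → M → ℝ) (inv_pos.mpr hc) ht
      rwa [hinv] at this
    have := csInf_le (repSet_bddBelow (μ := μ)) h2
    rw [← tcNorm_eq] at this
    calc c * tcNorm (dist : M → M → ℝ) μ ≤ c * (c⁻¹ * t) :=
          mul_le_mul_of_nonneg_left this hc.le
      _ = t := by field_simp

lemma repSet_neg (μ : M → ℝ) : repSet (dist : M → M → ℝ) (-μ) = repSet (dist : M → M → ℝ) μ := by
  have key : ∀ ν : M → ℝ, repSet (dist : M → M → ℝ) ν ⊆ repSet (dist : M → M → ℝ) (-ν) := by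
    rintro ν c ⟨n, r, x, y, hrep, rfl⟩
    refine ⟨n, r, y, x, ⟨hrep.1, fun j => (hrep.2.1 j).symm, fun m => ?_⟩, ?_⟩
    · simp only [Pi.neg_apply, hrep.2.2 m, ← Finset.sum_neg_distrib]
      exact Finset.sum_congr rfl fun j _ => by ring
    · simp only [molCost]
      exact Finset.sum_congr rfl fun j _ => by rw [dist_comm]
  apply le_antisymm
  · intro c hc
    have := key (-μ) hc
    rwa [neg_neg] at this
  · exact key μ

lemma tcNorm_neg (μ : M → ℝ) :
    tcNorm (dist : M → M → ℝ) (-μ) = tcNorm (dist : M → M → ℝ) μ := by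
  rw [tcNorm_eq, tcNorm_eq, repSet_neg]

lemma add_mem_repSet (d : M → M → ℝ) {μ ν : M → ℝ} {s t : ℝ}
    (hs : s ∈ repSet d μ) (ht : t ∈ repSet d ν) : s + t ∈ repSet d (μ + ν) := by
  obtain ⟨n1, r1, x1, y1, h1, rfl⟩ := hs
  obtain ⟨n2, r2, x2, y2, h2, rfl⟩ := ht
  refine ⟨n1 + n2, Fin.append r1 r2, Fin.append x1 x2, Fin.append y1 y2, ⟨?_, ?_, ?_⟩, ?_⟩
  · intro j
    induction j using Fin.addCases with
    | left i => rw [Fin.append_left]; exact h1.1 i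
    | right i => rw [Fin.append_right]; exact h2.1 i
  · intro j
    induction j using Fin.addCases with
    | left i => rw [Fin.append_left, Fin.append_left]; exact h1.2.1 i
    | right i => rw [Fin.append_right, Fin.append_right]; exact h2.2.1 i
  · intro m
    rw [Fin.sum_univ_add]
    simp only [Fin.append_left, Fin.append_right]
    rw [Pi.add_apply, h1.2.2 m, h2.2.2 m]
  · simp only [molCost]
    rw [Fin.sum_univ_add]
    simp only [Fin.append_left, Fin.append_right]

lemma tcNorm_add_le {μ ν : M → ℝ} (h1 : (repSet (dist : M → M → ℝ) μ).Nonempty)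
    (h2 : (repSet (dist : M → M → ℝ) ν).Nonempty) :
    tcNorm (dist : M → M → ℝ) (μ + ν) ≤
      tcNorm (dist : M → M → ℝ) μ + tcNorm (dist : M → M → ℝ) ν := by
  have key : ∀ s ∈ repSet (dist : M → M → ℝ) μ, ∀ t ∈ repSet (dist : M → M → ℝ) ν,
      tcNorm (dist : M → M → ℝ) (μ + ν) ≤ s + t := fun s hs t ht =>
    csInf_le repSet_bddBelow (add_mem_repSet _ hs ht)
  have step : ∀ s ∈ repSet (dist : M → M → ℝ) μ,
      tcNorm (dist : M → M → ℝ) (μ + ν) - s ≤ tcNorm (dist : M → M → ℝ) ν := by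
    intro s hs
    refine le_csInf h2 fun t ht => ?_
    linarith [key s hs t ht]
  have : tcNorm (dist : M → M → ℝ) (μ + ν) - tcNorm (dist : M → M → ℝ) ν ≤
      tcNorm (dist : M → M → ℝ) μ := by
    refine le_csInf h1 fun s hs => ?_
    linarith [step s hs]
  linarith

lemma tcNorm_point_bound {μ : M → ℝ} (h : (repSet (dist : M → M → ℝ) μ).Nonempty)
    {c : ℝ} (hc : 0 ≤ c) (hcd : ∀ x y : M, x ≠ y → c ≤ dist x y) (m : M) :
    c * |μ m| ≤ tcNorm (dist : M → M → ℝ) μ := by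
  refine le_csInf h ?_
  rintro s ⟨n, r, x, y, hrep, rfl⟩
  have h1 : |μ m| ≤ ∑ j, r j := by
    rw [hrep.2.2 m]
    refine (Finset.abs_sum_le_sum_abs _ _).trans (Finset.sum_le_sum fun j _ => ?_)
    rw [abs_mul]
    have ht : |(if x j = m then (1:ℝ) else 0) - (if y j = m then (1:ℝ) else 0)| ≤ 1 := by
      split_ifs <;> norm_num
    calc |r j| * |(if x j = m then (1:ℝ) else 0) - (if y j = m then (1:ℝ) else 0)|
        ≤ |r j| * 1 := mul_le_mul_of_nonneg_left ht (abs_nonneg _)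
      _ = r j := by rw [mul_one, abs_of_pos (hrep.1 j)]
  calc c * |μ m| ≤ c * ∑ j, r j := mul_le_mul_of_nonneg_left h1 hc
    _ = ∑ j, c * r j := Finset.mul_sum _ _ _
    _ ≤ ∑ j, r j * dist (x j) (y j) := Finset.sum_le_sum fun j _ => by
        rw [mul_comm]
        exact mul_le_mul_of_nonneg_left (hcd _ _ (hrep.2.1 j)) (hrep.1 j).le
  

lemma tcNorm_smul_nonneg {μ : M → ℝ} {c : ℝ} (hc : 0 ≤ c)
    (h : (repSet (dist : M → M → ℝ) μ).Nonempty) :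
    tcNorm (dist : M → M → ℝ) (c • μ) = c * tcNorm (dist : M → M → ℝ) μ := by
  rcases eq_or_lt_of_le hc with rfl | hc'
  · rw [zero_smul, zero_mul, tcNorm_zero]
  · exact tcNorm_smul hc' h

omit [MetricSpace M] in
lemma rep_nonempty [Fintype M] (d : M → M → ℝ) (x0 : M) {μ : M → ℝ}
    (hsum : ∑ x, μ x = 0) : (repSet d μ).Nonempty := by
  classical
  set J : Finset M := Finset.univ.filter (fun z => z ≠ x0 ∧ μ z ≠ 0) with hJ
  set n := J.card with hn
  set e : Fin n → M := fun j => (J.equivFin.symm j : M) with he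
  have heJ : ∀ j, e j ∈ J := fun j => (J.equivFin.symm j).2
  have hex0 : ∀ j, e j ≠ x0 := fun j => ((Finset.mem_filter.mp (heJ j)).2).1
  have hene : ∀ j, μ (e j) ≠ 0 := fun j => ((Finset.mem_filter.mp (heJ j)).2).2
  refine ⟨_, n, fun j => |μ (e j)|,
    fun j => if 0 < μ (e j) then e j else x0,
    fun j => if 0 < μ (e j) then x0 else e j,
    ⟨fun j => abs_pos.mpr (hene j), fun j => ?_, fun m => ?_⟩, rfl⟩
  · simp only []
    split_ifs
    · exact hex0 j
    · exact (hex0 j).symm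
  · have hterm : ∀ j, |μ (e j)| * ((if (if 0 < μ (e j) then e j else x0) = m then (1:ℝ) else 0)
        - (if (if 0 < μ (e j) then x0 else e j) = m then (1:ℝ) else 0))
        = μ (e j) * ((if e j = m then (1:ℝ) else 0) - (if x0 = m then (1:ℝ) else 0)) := by
      intro j
      rcases lt_or_gt_of_ne (hene j) with hneg | hpos
      · rw [if_neg (not_lt.mpr hneg.le), if_neg (not_lt.mpr hneg.le), abs_of_neg hneg]
        ring
      · rw [if_pos hpos, if_pos hpos, abs_of_pos hpos]
    rw [Finset.sum_congr rfl (fun j _ => hterm j)]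
    have hsum2 : ∑ j, μ (e j) * ((if e j = m then (1:ℝ) else 0) - (if x0 = m then (1:ℝ) else 0))
        = ∑ z ∈ J, μ z * ((if z = m then (1:ℝ) else 0) - (if x0 = m then (1:ℝ) else 0)) := by
      rw [← Finset.sum_coe_sort J (fun z => μ z * ((if z = m then (1:ℝ) else 0) - (if x0 = m then (1:ℝ) else 0)))]
      exact Fintype.sum_equiv J.equivFin.symm _ _ (fun j => rfl)
    rw [hsum2]
    have hJsum : ∑ z ∈ J, μ z = -μ x0 := by
      have h1 : ∑ z ∈ J, μ z = ∑ z ∈ Finset.univ.filter (fun z => z ≠ x0), μ z := by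
        refine Finset.sum_subset (fun z hz => ?_) ?_
        · rw [hJ, Finset.mem_filter] at hz
          exact Finset.mem_filter.mpr ⟨hz.1, hz.2.1⟩
        · intro z hz hnz
          by_contra hne
          exact hnz (Finset.mem_filter.mpr ⟨Finset.mem_univ z, (Finset.mem_filter.mp hz).2, hne⟩)
      have h2 : Finset.univ.filter (fun z => z ≠ x0) = Finset.univ.erase x0 := Finset.filter_ne' _ _
      have h3 := Finset.sum_erase_add Finset.univ μ (Finset.mem_univ x0)
      rw [h1, h2]
      rw [hsum] at h3
      linarith
    have expand : ∑ z ∈ J, μ z * ((if z = m then (1:ℝ) else 0) - (if x0 = m then (1:ℝ) else 0))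
        = (∑ z ∈ J, if z = m then μ z else 0) - (∑ z ∈ J, μ z) * (if x0 = m then (1:ℝ) else 0) := by
      rw [Finset.sum_mul, ← Finset.sum_sub_distrib]
      refine Finset.sum_congr rfl fun z _ => ?_
      split_ifs <;> ring
    rw [expand, Finset.sum_ite_eq' J m (fun z => μ z), hJsum]
    by_cases hmx : m = x0
    · subst hmx
      have : m ∉ J := by simp [hJ]
      rw [if_neg this, if_pos rfl]
      ring
    · rw [if_neg (fun h : x0 = m => hmx h.symm)]
      by_cases hmJ : m ∈ J
      · rw [if_pos hmJ]; ring
      · rw [if_neg hmJ]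
        have : μ m = 0 := by
          by_contra hne
          exact hmJ (Finset.mem_filter.mpr ⟨Finset.mem_univ m, hmx, hne⟩)
        rw [this]; ring

end TCAux

namespace LpAux
open Set MeasureTheory
open scoped ENNReal NNReal
noncomputable section

abbrev L1I := Lp ℝ 1 (volume.restrict (Set.Icc (0 : ℝ) 1))

abbrev bigMeas : Measure (ℝ × ℝ) := (volume : Measure (ℝ × ℝ)).restrict (Set.Icc (0 : ℝ) 1 ×ˢ Set.univ)

def strip (a : ℝ) (g : L1I) : ℝ × ℝ → ℝ :=
  fun p => if p.2 ∈ Set.Ioc (0 : ℝ) a then g p.1 else 0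

lemma strip_sm (a : ℝ) (g : L1I) : StronglyMeasurable (strip a g) := by
  have hg : StronglyMeasurable (⇑g) := Lp.stronglyMeasurable g
  have : strip a g = Set.indicator (Prod.snd ⁻¹' Set.Ioc (0:ℝ) a) (fun p : ℝ × ℝ => g p.1) := by
    funext p
    simp only [strip, Set.indicator, Set.mem_preimage]
  rw [this]
  exact (hg.comp_measurable measurable_fst).indicator (measurable_snd measurableSet_Ioc)

lemma bigMeas_eq : bigMeas = (volume.restrict (Set.Icc (0 : ℝ) 1)).prod (volume : Measure ℝ) := by
  rw [show bigMeas = (volume : Measure (ℝ × ℝ)).restrict (Set.Icc (0 : ℝ) 1 ×ˢ Set.univ) from rfl,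
    Measure.volume_eq_prod, ← Measure.prod_restrict, Measure.restrict_univ]

lemma strip_enorm {a b : ℝ} (ha : 0 ≤ a) (hab : a ≤ b) (g h : L1I) (p : ℝ × ℝ) :
    (‖strip a g p - strip b h p‖₊ : ℝ≥0∞) =
      Set.indicator (Set.Ioc (0:ℝ) a) (fun _ => (‖g p.1 - h p.1‖₊ : ℝ≥0∞)) p.2
      + Set.indicator (Set.Ioc a b) (fun _ => (‖h p.1‖₊ : ℝ≥0∞)) p.2 := by
  by_cases h1 : p.2 ∈ Set.Ioc (0:ℝ) a
  · have h2 : p.2 ∉ Set.Ioc a b := fun h2 => absurd h1.2 (not_le.mpr h2.1)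
    have h3 : p.2 ∈ Set.Ioc (0:ℝ) b := ⟨h1.1, h1.2.trans hab⟩
    simp [strip, h1, h2, h3, Set.indicator_of_mem, Set.indicator_of_notMem]
  · by_cases h2 : p.2 ∈ Set.Ioc a b
    · have h3 : p.2 ∈ Set.Ioc (0:ℝ) b := ⟨lt_of_le_of_lt ha h2.1, h2.2⟩
      simp [strip, h1, h2, h3, Set.indicator_of_mem, Set.indicator_of_notMem]
    · have h3 : p.2 ∉ Set.Ioc (0:ℝ) b := by
        rw [← Set.Ioc_union_Ioc_eq_Ioc ha hab]
        simp [h1, h2]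
      simp [strip, h1, h2, h3, Set.indicator_of_notMem]

lemma key_lintegral {a b : ℝ} (ha : 0 ≤ a) (hab : a ≤ b) (g h : L1I) :
    ∫⁻ p, ‖strip a g p - strip b h p‖₊ ∂bigMeas
      = ENNReal.ofReal a * ∫⁻ s, ‖g s - h s‖₊ ∂(volume.restrict (Set.Icc (0:ℝ) 1))
        + ENNReal.ofReal (b - a) * ∫⁻ s, ‖h s‖₊ ∂(volume.restrict (Set.Icc (0:ℝ) 1)) := by
  have hmeas : Measurable fun p : ℝ × ℝ => (‖strip a g p - strip b h p‖₊ : ℝ≥0∞) :=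
    (((strip_sm a g).sub (strip_sm b h)).measurable).nnnorm.coe_nnreal_ennreal
  rw [bigMeas_eq, lintegral_prod _ hmeas.aemeasurable]
  have inner : ∀ s : ℝ, ∫⁻ u, ‖strip a g (s, u) - strip b h (s, u)‖₊ ∂(volume : Measure ℝ)
      = (‖g s - h s‖₊ : ℝ≥0∞) * ENNReal.ofReal a + (‖h s‖₊ : ℝ≥0∞) * ENNReal.ofReal (b - a) := by
    intro s
    have : ∀ u : ℝ, (‖strip a g (s, u) - strip b h (s, u)‖₊ : ℝ≥0∞)
        = Set.indicator (Set.Ioc (0:ℝ) a) (fun _ => (‖g s - h s‖₊ : ℝ≥0∞)) u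
          + Set.indicator (Set.Ioc a b) (fun _ => (‖h s‖₊ : ℝ≥0∞)) u :=
      fun u => strip_enorm ha hab g h (s, u)
    simp_rw [this]
    rw [lintegral_add_left ((measurable_const).indicator measurableSet_Ioc)]
    rw [lintegral_indicator measurableSet_Ioc, lintegral_indicator measurableSet_Ioc]
    rw [setLIntegral_const, setLIntegral_const, Real.volume_Ioc, Real.volume_Ioc, sub_zero]
  simp_rw [inner]
  rw [lintegral_add_left]
  · rw [lintegral_mul_const _ (show Measurable fun s => (‖g s - h s‖₊ : ℝ≥0∞) from ((Lp.stronglyMeasurable g).measurable.sub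
        (Lp.stronglyMeasurable h).measurable).nnnorm.coe_nnreal_ennreal),
      lintegral_mul_const _ (Lp.stronglyMeasurable h).measurable.nnnorm.coe_nnreal_ennreal]
    ring
  · exact ((Lp.stronglyMeasurable g).measurable.sub
      (Lp.stronglyMeasurable h).measurable).nnnorm.coe_nnreal_ennreal.mul_const _

lemma strip_zero (g : L1I) (p : ℝ × ℝ) : strip 0 g p = 0 := by
  simp [strip, Set.Ioc_self]

lemma strip_memℒp {a : ℝ} (ha : 0 ≤ a) (g : L1I) : MemLp (strip a g) 1 bigMeas := by
  refine ⟨(strip_sm a g).aestronglyMeasurable, ?_⟩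
  rw [eLpNorm_one_eq_lintegral_enorm]; simp only [enorm_eq_nnnorm]
  have : ∀ p : ℝ × ℝ, (‖strip a g p‖₊ : ℝ≥0∞) = ‖strip 0 g p - strip a g p‖₊ := by
    intro p
    rw [strip_zero, zero_sub, nnnorm_neg]
  simp_rw [this]
  rw [key_lintegral le_rfl ha g g]
  have hg : ∫⁻ s, (‖g s‖₊ : ℝ≥0∞) ∂(volume.restrict (Set.Icc (0:ℝ) 1)) < ⊤ := by
    simp only [← enorm_eq_nnnorm]; rw [← eLpNorm_one_eq_lintegral_enorm]
    exact Lp.eLpNorm_lt_top g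
  simp only [ENNReal.ofReal_zero, zero_mul, zero_add, sub_zero]
  exact ENNReal.mul_lt_top ENNReal.ofReal_lt_top hg

def stripLp (a : ℝ) (g : L1I) : Lp ℝ 1 bigMeas :=
  if ha : 0 ≤ a then (strip_memℒp ha g).toLp (strip a g) else 0

lemma norm_stripLp_sub {a b : ℝ} (ha : 0 ≤ a) (hab : a ≤ b) (g h : L1I) :
    ‖stripLp a g - stripLp b h‖ = a * ‖g - h‖ + (b - a) * ‖h‖ := by
  rw [stripLp, stripLp, dif_pos ha, dif_pos (ha.trans hab)]
  have hae : ⇑((strip_memℒp ha g).toLp (strip a g) -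
      (strip_memℒp (ha.trans hab) h).toLp (strip b h)) =ᵐ[bigMeas]
      fun p => strip a g p - strip b h p := by
    filter_upwards [Lp.coeFn_sub ((strip_memℒp ha g).toLp (strip a g))
      ((strip_memℒp (ha.trans hab) h).toLp (strip b h)),
      MemLp.coeFn_toLp (strip_memℒp ha g), MemLp.coeFn_toLp (strip_memℒp (ha.trans hab) h)]
      with p h1 h2 h3
    rw [h1, Pi.sub_apply, h2, h3]
  rw [Lp.norm_def, eLpNorm_congr_ae hae, eLpNorm_one_eq_lintegral_enorm]; simp only [enorm_eq_nnnorm]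
  have := key_lintegral ha hab g h
  simp only [this]
  have e1 : ∫⁻ s, (‖g s - h s‖₊ : ℝ≥0∞) ∂(volume.restrict (Set.Icc (0:ℝ) 1))
      = eLpNorm (⇑(g - h)) 1 (volume.restrict (Set.Icc (0:ℝ) 1)) := by
    rw [eLpNorm_congr_ae (Lp.coeFn_sub g h), eLpNorm_one_eq_lintegral_enorm]
    rfl
  have e2 : ∫⁻ s, (‖h s‖₊ : ℝ≥0∞) ∂(volume.restrict (Set.Icc (0:ℝ) 1))
      = eLpNorm (⇑h) 1 (volume.restrict (Set.Icc (0:ℝ) 1)) :=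
    (eLpNorm_one_eq_lintegral_enorm (f := ⇑h)).symm
  rw [e1, e2]
  rw [ENNReal.toReal_add (ENNReal.mul_ne_top ENNReal.ofReal_ne_top (Lp.eLpNorm_ne_top _))
    (ENNReal.mul_ne_top ENNReal.ofReal_ne_top (Lp.eLpNorm_ne_top _))]
  rw [ENNReal.toReal_mul, ENNReal.toReal_mul, ENNReal.toReal_ofReal ha,
    ENNReal.toReal_ofReal (sub_nonneg.mpr hab), ← Lp.norm_def, ← Lp.norm_def]

end

end LpAux

open TCAux LpAux

/-- If `F` maps the finitely supported probability measures on a finite metric space `M` into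
`L₁[0,1]` with `d_Wa(σ,τ) ≤ ‖F σ - F τ‖₁ ≤ L · d_Wa(σ,τ)`, then there is a map
`H : F̃(M) → L₁([0,1] × ℝ)` with `‖μ - ν‖_tc ≤ ‖H μ - H ν‖₁ ≤ 3L·‖μ - ν‖_tc`. -/
theorem lipschitz_embedding_of_wasserstein_embedding {M : Type*} [MetricSpace M] [Fintype M]
    (L : ℝ) (hL : 1 ≤ L)
    (F : {σ : M →₀ ℝ // (∀ x, 0 ≤ σ x) ∧ (σ.sum fun _ v => v) = 1} →
      Lp ℝ 1 (volume.restrict (Set.Icc (0 : ℝ) 1)))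
    (hF : ∀ σ τ : {σ : M →₀ ℝ // (∀ x, 0 ≤ σ x) ∧ (σ.sum fun _ v => v) = 1},
      tcNorm dist ⇑(σ.1 - τ.1) ≤ ‖F σ - F τ‖ ∧
      ‖F σ - F τ‖ ≤ L * tcNorm dist ⇑(σ.1 - τ.1)) :
    ∃ H : {μ : M →₀ ℝ // (μ.sum fun _ v => v) = 0} →
        Lp ℝ 1 ((volume : Measure (ℝ × ℝ)).restrict (Set.Icc (0 : ℝ) 1 ×ˢ Set.univ)),
      ∀ μ ν : {μ : M →₀ ℝ // (μ.sum fun _ v => v) = 0},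
        tcNorm dist ⇑(μ.1 - ν.1) ≤ ‖H μ - H ν‖ ∧
        ‖H μ - H ν‖ ≤ 3 * L * tcNorm dist ⇑(μ.1 - ν.1) := by
  classical
  have hL0 : 0 < L := lt_of_lt_of_le one_pos hL
  -- sum over the fintype of any element of the zero-sum subtype vanishes
  have hsz : ∀ μ : {μ : M →₀ ℝ // (μ.sum fun _ v => v) = 0}, ∑ x, μ.1 x = 0 := by
    intro μ
    have := μ.2
    rwa [Finsupp.sum_fintype _ _ (fun _ => rfl)] at this
  by_cases htriv : ∀ x y : M, x = y
  · -- degenerate case: at most one point, every zero-sum measure is zero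
    have hzero : ∀ μ : {μ : M →₀ ℝ // (μ.sum fun _ v => v) = 0}, μ.1 = 0 := by
      intro μ
      ext x
      have hall : ∀ z : M, z = x := fun z => htriv z x
      have h1 : ∑ z, μ.1 z = (Fintype.card M : ℝ) * μ.1 x := by
        calc ∑ z, μ.1 z = ∑ _z : M, μ.1 x := Finset.sum_congr rfl (fun z _ => by rw [hall z])
          _ = (Fintype.card M : ℝ) * μ.1 x := by
              rw [Finset.sum_const, Finset.card_univ, nsmul_eq_mul]
      have hc : (0 : ℝ) < (Fintype.card M : ℝ) := by
        have : Nonempty M := ⟨x⟩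
        exact_mod_cast Fintype.card_pos
      have := hsz μ
      rw [h1] at this
      simpa using (mul_eq_zero.mp this).resolve_left (ne_of_gt hc)
    refine ⟨fun _ => 0, fun μ ν => ?_⟩
    have h0 : μ.1 - ν.1 = 0 := by rw [hzero μ, hzero ν, sub_zero]
    rw [h0, Finsupp.coe_zero, tcNorm_zero, sub_zero, norm_zero]
    norm_num
  · push_neg at htriv
    obtain ⟨x0, y0, hxy0⟩ := htriv
    have hnM : Nonempty M := ⟨x0⟩
    have hcardpos : (0 : ℝ) < (Fintype.card M : ℝ) := by exact_mod_cast Fintype.card_pos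
    -- minimal distance
    set pairs : Finset (M × M) := Finset.univ.filter (fun p => p.1 ≠ p.2) with hpairs
    have hpne : pairs.Nonempty := ⟨(x0, y0), by simp [hpairs, hxy0]⟩
    set c : ℝ := pairs.inf' hpne (fun p => dist p.1 p.2) with hcdef
    have hc0 : 0 < c := by
      rw [hcdef, Finset.lt_inf'_iff]
      intro p hp
      rw [hpairs, Finset.mem_filter] at hp
      exact dist_pos.mpr hp.2
    have hcle : ∀ x y : M, x ≠ y → c ≤ dist x y := fun x y hxy =>
      Finset.inf'_le _ (show (x, y) ∈ pairs by simp [hpairs, hxy])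
    set A : ℝ := (Fintype.card M : ℝ) / c with hAdef
    have hA : 0 < A := div_pos hcardpos hc0
    set t : {μ : M →₀ ℝ // (μ.sum fun _ v => v) = 0} → ℝ :=
      fun μ => tcNorm (dist : M → M → ℝ) ⇑μ.1 with htdef
    have hrepne : ∀ μ : {μ : M →₀ ℝ // (μ.sum fun _ v => v) = 0},
        (repSet (dist : M → M → ℝ) ⇑μ.1).Nonempty := fun μ => rep_nonempty _ x0 (hsz μ)
    have ht0 : ∀ μ, 0 ≤ t μ := fun μ => tcNorm_nonneg _
    have hpt : ∀ μ, ∀ x : M, c * |μ.1 x| ≤ t μ := fun μ x =>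
      tcNorm_point_bound (hrepne μ) hc0.le hcle x
    have htpos : ∀ μ, μ.1 ≠ 0 → 0 < t μ := by
      intro μ hμ
      obtain ⟨x, hx⟩ : ∃ x, μ.1 x ≠ 0 := by
        by_contra h
        push_neg at h
        exact hμ (Finsupp.ext fun x => h x)
      have h1 : 0 < c * |μ.1 x| := mul_pos hc0 (abs_pos.mpr hx)
      exact lt_of_lt_of_le h1 (hpt μ x)
    have htzero : ∀ μ, μ.1 = 0 → t μ = 0 := by
      intro μ hμ
      rw [htdef]
      simp only [hμ, Finsupp.coe_zero]
      exact tcNorm_zero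
    -- the associated probability measures
    have hpos : ∀ μ : {μ : M →₀ ℝ // (μ.sum fun _ v => v) = 0}, ∀ x : M,
        0 ≤ (Fintype.card M : ℝ)⁻¹ + μ.1 x / (A * t μ) := by
      intro μ x
      by_cases hμ : μ.1 = 0
      · simp [hμ, inv_nonneg, hcardpos.le]
      · have ha : 0 < A * t μ := mul_pos hA (htpos μ hμ)
        rcases le_or_gt 0 (μ.1 x) with hx | hx
        · have : 0 ≤ μ.1 x / (A * t μ) := div_nonneg hx ha.le
          have : 0 ≤ (Fintype.card M : ℝ)⁻¹ := inv_nonneg.mpr hcardpos.le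
          positivity
        · have key : (Fintype.card M : ℝ) * (-(μ.1 x)) ≤ A * t μ := by
            have h2 : A * (c * |μ.1 x|) ≤ A * t μ :=
              mul_le_mul_of_nonneg_left (hpt μ x) hA.le
            have h3 : (Fintype.card M : ℝ) * (-(μ.1 x)) = A * (c * |μ.1 x|) := by
              rw [abs_of_neg hx, hAdef]
              field_simp
            linarith
          have h4 : -(μ.1 x) / (A * t μ) ≤ (Fintype.card M : ℝ)⁻¹ := by
            rw [div_le_iff₀ ha]
            calc -(μ.1 x) = (Fintype.card M : ℝ)⁻¹ * ((Fintype.card M : ℝ) * (-(μ.1 x))) := by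
                  rw [← mul_assoc, inv_mul_cancel₀ (ne_of_gt hcardpos), one_mul]
              _ ≤ (Fintype.card M : ℝ)⁻¹ * (A * t μ) :=
                  mul_le_mul_of_nonneg_left key (inv_nonneg.mpr hcardpos.le)
          have h5 : μ.1 x / (A * t μ) = -(-(μ.1 x) / (A * t μ)) := by rw [neg_div, neg_neg]
          linarith
    have hsum1 : ∀ μ : {μ : M →₀ ℝ // (μ.sum fun _ v => v) = 0},
        ((Finsupp.equivFunOnFinite.symm
          (fun x => (Fintype.card M : ℝ)⁻¹ + μ.1 x / (A * t μ)) : M →₀ ℝ).sum fun _ v => v) = 1 := by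
      intro μ
      rw [Finsupp.sum_fintype _ _ (fun _ => rfl)]
      simp only [Finsupp.coe_equivFunOnFinite_symm]
      rw [Finset.sum_add_distrib, Finset.sum_const, ← Finset.sum_div, hsz μ, zero_div, add_zero,
        Finset.card_univ, nsmul_eq_mul, mul_inv_cancel₀ (ne_of_gt hcardpos)]
    set P : {μ : M →₀ ℝ // (μ.sum fun _ v => v) = 0} →
        {σ : M →₀ ℝ // (∀ x, 0 ≤ σ x) ∧ (σ.sum fun _ v => v) = 1} :=
      fun μ => ⟨Finsupp.equivFunOnFinite.symm
        (fun x => (Fintype.card M : ℝ)⁻¹ + μ.1 x / (A * t μ)),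
        fun x => by simpa using hpos μ x, hsum1 μ⟩ with hPdef
    set z0 : {μ : M →₀ ℝ // (μ.sum fun _ v => v) = 0} :=
      ⟨0, by rw [Finsupp.sum_fintype _ _ (fun _ => rfl)]; simp⟩ with hz0def
    set H : {μ : M →₀ ℝ // (μ.sum fun _ v => v) = 0} → Lp ℝ 1 bigMeas :=
      fun μ => stripLp (A * t μ) (F (P μ) - F (P z0)) with hHdef
    refine ⟨H, ?_⟩
    have hcoeP : ∀ μ ν, ⇑((P μ).1 - (P ν).1) =
        fun x => μ.1 x / (A * t μ) - ν.1 x / (A * t ν) := by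
      intro μ ν
      rw [Finsupp.coe_sub]
      funext x
      simp only [hPdef, Pi.sub_apply, Finsupp.coe_equivFunOnFinite_symm]
      ring
    have hz0coe : ∀ x : M, (z0.1 : M →₀ ℝ) x = 0 := fun x => by rw [hz0def]; rfl
    have hta : ∀ μ, 0 ≤ A * t μ := fun μ => mul_nonneg hA.le (ht0 μ)
    have hcoePz : ∀ ν, ⇑((P ν).1 - (P z0).1) = fun x => ν.1 x / (A * t ν) := by
      intro ν
      rw [hcoeP ν z0]
      funext x
      rw [hz0coe x, zero_div, sub_zero]
    have hWz : ∀ ν, ν.1 ≠ 0 →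
        tcNorm (dist : M → M → ℝ) ⇑((P ν).1 - (P z0).1) = t ν / (A * t ν) := by
      intro ν hν
      have hb : 0 < A * t ν := mul_pos hA (htpos ν hν)
      rw [hcoePz ν]
      have hfun : (fun x => ν.1 x / (A * t ν)) = (A * t ν)⁻¹ • ⇑ν.1 := by
        funext x
        rw [Pi.smul_apply, smul_eq_mul]
        ring
      rw [hfun, tcNorm_smul (inv_pos.mpr hb) (hrepne ν), inv_mul_eq_div]
    have core : ∀ μ ν, t μ ≤ t ν →
        tcNorm dist ⇑(μ.1 - ν.1) ≤ ‖H μ - H ν‖ ∧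
        ‖H μ - H ν‖ ≤ 3 * L * tcNorm dist ⇑(μ.1 - ν.1) := by
      intro μ ν hle
      have hab : A * t μ ≤ A * t ν := mul_le_mul_of_nonneg_left hle hA.le
      have hnormEq : ‖H μ - H ν‖ = (A * t μ) * ‖F (P μ) - F (P ν)‖
          + (A * t ν - A * t μ) * ‖F (P ν) - F (P z0)‖ := by
        simp only [hHdef]
        rw [norm_stripLp_sub (hta μ) hab, sub_sub_sub_cancel_right]
      by_cases hν : ν.1 = 0
      · have hμ : μ.1 = 0 := by
          by_contra hμ
          have := htpos μ hμ
          have := htzero ν hν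
          linarith
        have hμν : μ.1 - ν.1 = 0 := by rw [hμ, hν, sub_zero]
        rw [hμν, Finsupp.coe_zero, tcNorm_zero, hnormEq, htzero μ hμ, htzero ν hν]
        norm_num
      · have htν : 0 < t ν := htpos ν hν
        have hb : 0 < A * t ν := mul_pos hA htν
        set D2 : ℝ := ‖F (P ν) - F (P z0)‖ with hD2def
        have hD2l : t ν / (A * t ν) ≤ D2 := by rw [← hWz ν hν]; exact (hF _ _).1
        have hD2u : D2 ≤ L * (t ν / (A * t ν)) := by rw [← hWz ν hν]; exact (hF _ _).2
        have he2 : (A * t ν - A * t μ) * (t ν / (A * t ν)) = t ν - t μ := by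
          field_simp
        by_cases hμ : μ.1 = 0
        · have ht0μ : t μ = 0 := htzero μ hμ
          have hδ : tcNorm dist ⇑(μ.1 - ν.1) = t ν := by
            rw [hμ, zero_sub, Finsupp.coe_neg, tcNorm_neg]
          rw [hδ, hnormEq, ht0μ]
          have h1 : (A * t ν) * (t ν / (A * t ν)) = t ν := by field_simp
          have h2 : (A * t ν) * (t ν / (A * t ν)) ≤ (A * t ν) * D2 :=
            mul_le_mul_of_nonneg_left hD2l hb.le
          have h3 : (A * t ν) * D2 ≤ (A * t ν) * (L * (t ν / (A * t ν))) :=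
            mul_le_mul_of_nonneg_left hD2u hb.le
          have h4 : (A * t ν) * (L * (t ν / (A * t ν))) = L * t ν := by
            field_simp
          have h5 : 0 ≤ L * t ν := mul_nonneg hL0.le htν.le
          constructor
          · simp only [mul_zero, zero_mul, sub_zero, zero_add]
            linarith
          · simp only [mul_zero, zero_mul, sub_zero, zero_add]
            nlinarith
        · have htμ : 0 < t μ := htpos μ hμ
          have ha' : 0 < A * t μ := mul_pos hA htμ
          set q : ℝ := (A * t μ) / (A * t ν) with hqdef
          have hq0 : 0 < q := div_pos ha' hb
          have hq1 : q ≤ 1 := (div_le_one hb).mpr hab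
          have hqt : q * t ν = t μ := by
            rw [hqdef]
            field_simp
          set E : ℝ := tcNorm (dist : M → M → ℝ) (⇑μ.1 - q • ⇑ν.1) with hEdef
          have hsumE : ∑ x, (⇑μ.1 - q • ⇑ν.1) x = 0 := by
            simp only [Pi.sub_apply, Pi.smul_apply, smul_eq_mul]
            rw [Finset.sum_sub_distrib, ← Finset.mul_sum, hsz μ, hsz ν, mul_zero, sub_zero]
          have hEne := rep_nonempty (dist : M → M → ℝ) x0 hsumE
          have hWid : tcNorm dist ⇑((P μ).1 - (P ν).1) = (A * t μ)⁻¹ * E := by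
            rw [hcoeP μ ν]
            have hfun : (fun x => μ.1 x / (A * t μ) - ν.1 x / (A * t ν))
                = (A * t μ)⁻¹ • (⇑μ.1 - q • ⇑ν.1) := by
              funext x
              simp only [Pi.smul_apply, Pi.sub_apply, smul_eq_mul, hqdef]
              field_simp
            rw [hfun, tcNorm_smul (inv_pos.mpr ha') hEne]
          set D1 : ℝ := ‖F (P μ) - F (P ν)‖ with hD1def
          have hD1l : (A * t μ)⁻¹ * E ≤ D1 := by rw [← hWid]; exact (hF _ _).1
          have hD1u : D1 ≤ L * ((A * t μ)⁻¹ * E) := by rw [← hWid]; exact (hF _ _).2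
          set δ : ℝ := tcNorm (dist : M → M → ℝ) ⇑(μ.1 - ν.1) with hδdef
          have hδcoe : ⇑(μ.1 - ν.1) = ⇑μ.1 - ⇑ν.1 := Finsupp.coe_sub _ _
          have hsub1 : ∑ x, (⇑μ.1 - ⇑ν.1) x = 0 := by
            simp only [Pi.sub_apply]
            rw [Finset.sum_sub_distrib, hsz μ, hsz ν, sub_zero]
          have h1ne := rep_nonempty (dist : M → M → ℝ) x0 hsub1
          have hsmulsum : ∀ s : ℝ, ∑ x, ((s • ⇑ν.1) x) = 0 := by
            intro s
            simp only [Pi.smul_apply, smul_eq_mul]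
            rw [← Finset.mul_sum, hsz ν, mul_zero]
          have hsmval : (1 - q) * t ν = t ν - t μ := by rw [← hqt]; ring
          have hEup : E ≤ δ + (t ν - t μ) := by
            have hsplit : ⇑μ.1 - q • ⇑ν.1 = (⇑μ.1 - ⇑ν.1) + ((1 - q) • ⇑ν.1) := by
              funext x
              simp only [Pi.add_apply, Pi.sub_apply, Pi.smul_apply, smul_eq_mul]
              ring
            have hadd := tcNorm_add_le h1ne (rep_nonempty (dist : M → M → ℝ) x0 (hsmulsum (1 - q)))
            have hsm := tcNorm_smul_nonneg (by linarith : (0:ℝ) ≤ 1 - q) (hrepne ν)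
            calc E = tcNorm (dist : M → M → ℝ) ((⇑μ.1 - ⇑ν.1) + ((1 - q) • ⇑ν.1)) := by
                  rw [hEdef, hsplit]
              _ ≤ tcNorm (dist : M → M → ℝ) (⇑μ.1 - ⇑ν.1)
                  + tcNorm (dist : M → M → ℝ) ((1 - q) • ⇑ν.1) := hadd
              _ = δ + (t ν - t μ) := by rw [hsm, hδdef, hδcoe, hsmval]
          have hElow : δ ≤ E + (t ν - t μ) := by
            have hsplit2 : ⇑μ.1 - ⇑ν.1 = (⇑μ.1 - q • ⇑ν.1) + ((q - 1) • ⇑ν.1) := by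
              funext x
              simp only [Pi.add_apply, Pi.sub_apply, Pi.smul_apply, smul_eq_mul]
              ring
            have hadd := tcNorm_add_le hEne (rep_nonempty (dist : M → M → ℝ) x0 (hsmulsum (q - 1)))
            have hneg : ((q - 1) • ⇑ν.1 : M → ℝ) = -((1 - q) • ⇑ν.1) := by
              funext x
              simp only [Pi.neg_apply, Pi.smul_apply, smul_eq_mul]
              ring
            have hsm := tcNorm_smul_nonneg (by linarith : (0:ℝ) ≤ 1 - q) (hrepne ν)
            calc δ = tcNorm (dist : M → M → ℝ) ((⇑μ.1 - q • ⇑ν.1) + ((q - 1) • ⇑ν.1)) := by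
                  rw [hδdef, hδcoe, hsplit2]
              _ ≤ E + tcNorm (dist : M → M → ℝ) ((q - 1) • ⇑ν.1) := by
                  rw [hEdef]; exact hadd
              _ = E + (t ν - t μ) := by rw [hneg, tcNorm_neg, hsm, hsmval]
          have htd : t ν - t μ ≤ δ := by
            have hsplit3 : (⇑ν.1 : M → ℝ) = (⇑ν.1 - ⇑μ.1) + ⇑μ.1 := by
              funext x
              simp only [Pi.add_apply, Pi.sub_apply]
              ring
            have hsubν : ∑ x, (⇑ν.1 - ⇑μ.1) x = 0 := by
              simp only [Pi.sub_apply]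
              rw [Finset.sum_sub_distrib, hsz μ, hsz ν, sub_zero]
            have hadd := tcNorm_add_le (rep_nonempty (dist : M → M → ℝ) x0 hsubν) (hrepne μ)
            have hnegδ : tcNorm (dist : M → M → ℝ) (⇑ν.1 - ⇑μ.1) = δ := by
              rw [show (⇑ν.1 - ⇑μ.1 : M → ℝ) = -(⇑μ.1 - ⇑ν.1) from (neg_sub _ _).symm,
                tcNorm_neg, hδdef, hδcoe]
            have : t ν ≤ δ + t μ := by
              calc t ν = tcNorm (dist : M → M → ℝ) ((⇑ν.1 - ⇑μ.1) + ⇑μ.1) := by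
                    rw [← hsplit3]
                _ ≤ tcNorm (dist : M → M → ℝ) (⇑ν.1 - ⇑μ.1)
                    + tcNorm (dist : M → M → ℝ) ⇑μ.1 := hadd
                _ = δ + t μ := by rw [hnegδ]
            linarith
          have hδ0 : (0:ℝ) ≤ δ := tcNorm_nonneg _
          rw [hnormEq]
          have p1l : (A * t μ) * ((A * t μ)⁻¹ * E) ≤ (A * t μ) * D1 :=
            mul_le_mul_of_nonneg_left hD1l ha'.le
          have p1e : (A * t μ) * ((A * t μ)⁻¹ * E) = E := by field_simp
          have p1u : (A * t μ) * D1 ≤ (A * t μ) * (L * ((A * t μ)⁻¹ * E)) :=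
            mul_le_mul_of_nonneg_left hD1u ha'.le
          have p1ue : (A * t μ) * (L * ((A * t μ)⁻¹ * E)) = L * E := by
            field_simp
          have p2l : (A * t ν - A * t μ) * (t ν / (A * t ν)) ≤ (A * t ν - A * t μ) * D2 :=
            mul_le_mul_of_nonneg_left hD2l (by linarith)
          have p2u : (A * t ν - A * t μ) * D2 ≤ (A * t ν - A * t μ) * (L * (t ν / (A * t ν))) :=
            mul_le_mul_of_nonneg_left hD2u (by linarith)
          have p2ue : (A * t ν - A * t μ) * (L * (t ν / (A * t ν))) = L * (t ν - t μ) := by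
            calc (A * t ν - A * t μ) * (L * (t ν / (A * t ν)))
                = L * ((A * t ν - A * t μ) * (t ν / (A * t ν))) := by ring
              _ = L * (t ν - t μ) := by rw [he2]
          constructor
          · linarith
          · have hLE : L * E ≤ L * (δ + (t ν - t μ)) := mul_le_mul_of_nonneg_left hEup hL0.le
            have hLt : L * (t ν - t μ) ≤ L * δ := mul_le_mul_of_nonneg_left htd hL0.le
            have hexp : L * (δ + (t ν - t μ)) = L * δ + L * (t ν - t μ) := by ring
            linarith
    intro μ ν
    rcases le_total (t μ) (t ν) with h | h
    · exact core μ ν h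
    · obtain ⟨h1, h2⟩ := core ν μ h
      have hsymm : tcNorm dist ⇑(μ.1 - ν.1) = tcNorm dist ⇑(ν.1 - μ.1) := by
        rw [show ⇑(μ.1 - ν.1) = -(⇑(ν.1 - μ.1)) by
          rw [Finsupp.coe_sub, Finsupp.coe_sub, neg_sub], tcNorm_neg]
      rw [hsymm, norm_sub_rev]
      exact ⟨h1, h2⟩
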